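/- Let G be a simple graph with no ds-completable card such that the maximum degree over good vertices exceeds n − 1 − κ₁ − x, where n = |V(G)|, κ₁ is the number of vertices of degree 1, and x = 1 if G has no vertex of degree 2 and x = 0 otherwise. Then this situation is impossible; i.e., if some good vertex has degree greater than n − 1 − κ₁ − x, then G has a ds-completable card. -/

import Mathlib

open SimpleGraph Finset
open scoped Classical

variable {V : Type*}

/-- The degree of a vertex `u` in a simple graph `G`. -/
noncomputable def deg (G : SimpleGraph V) (u : V) : ℕ := (G.neighborSet u).ncard

/-- The degree of `u` in the card `G − v` (the vertex-deleted subgraph at `v`). -/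
noncomputable def cardDeg (G : SimpleGraph V) (v u : V) : ℕ := (G.neighborSet u \ {v}).ncard

/-- The card `G − v` is ds-completable: for each degree `d`, the vertices of degree `d`
in `G − v` are either all neighbours of `v` in `G` or all non-neighbours of `v` in `G`. -/
def DsCompletable (G : SimpleGraph V) (v : V) : Prop :=
  ∀ d : ℕ, (∀ u, u ≠ v → cardDeg G v u = d → G.Adj v u) ∨
           (∀ u, u ≠ v → cardDeg G v u = d → ¬ G.Adj v u)

/-- A vertex is bad if the graph contains a vertex of degree one less. -/
def Bad (G : SimpleGraph V) (v : V) : Prop := ∃ w, deg G w + 1 = deg G v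

/-- A vertex is dull if the graph contains a vertex of degree one more. -/
def Dull (G : SimpleGraph V) (v : V) : Prop := ∃ w, deg G w = deg G v + 1

/-- ε(s,t): the number of stubs on `s` used by edges from `s` to `t`
(for disjoint `s`, `t` this is the number of edges between them; for `s = t`
it is twice the number of edges inside `s`). -/
noncomputable def stubs (G : SimpleGraph V) (s t : Finset V) : ℕ :=
  ((s ×ˢ t).filter fun p => G.Adj p.1 p.2).card

/-- A vertex set is neighbourly if no vertex outside the set has a degree one less
than that of a vertex in the set. -/
def Neighbourly (G : SimpleGraph V) (K : Finset V) : Prop :=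
  ∀ u ∉ K, ∀ w ∈ K, deg G u + 1 ≠ deg G w

/-- A vertex set is `d`-neighbourly if it contains a vertex `v` of degree `d` such that
no vertex outside the set has a degree one less than that of any member other than `v`. -/
def DNeighbourly (G : SimpleGraph V) (d : ℕ) (K : Finset V) : Prop :=
  ∃ v ∈ K, deg G v = d ∧ ∀ u ∉ K, ∀ w ∈ K, w ≠ v → deg G u + 1 ≠ deg G w

/-! The card `G − w` is ds-completable exactly when no neighbour `u₁` of `w` and non-neighbour
`u₂ ≠ w` satisfy `deg u₁ = deg u₂ + 1`, since deleting `w` lowers the degrees of its neighbours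
by one. If the good vertex `v` has a pendant neighbour `p`, then `G − p` works: the only
neighbour of `p` is `v`, and no vertex has degree `deg v − 1`. Otherwise the degree bound leaves
few non-pendants. If `v` is itself a pendant, there is no isolated vertex and at most
`1 + x ≤ 2` non-pendants, and the card at the neighbour of `v` works. If not, `x = 1` and `v` is
adjacent to all other non-pendants; a non-neighbour of `v` is then a pendant, while no vertex
has degree `2`, so `G − v` works. -/

lemma cardDeg_of_not_adj (G : SimpleGraph V) {w u : V} (h : ¬ G.Adj w u) :
    cardDeg G w u = deg G u := by
  rw [cardDeg, Set.sdiff_singleton_eq_self (s := G.neighborSet u) fun hw => h (G.adj_symm hw)]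
  rfl

section Finite

variable [Finite V] (G : SimpleGraph V)

lemma cardDeg_add_one_of_adj {w u : V} (h : G.Adj w u) : cardDeg G w u + 1 = deg G u :=
  Set.ncard_sdiff_singleton_add_one h.symm

lemma dsCompletable_of_forall_deg_add_one_ne {w : V}
    (h : ∀ u₁ u₂, G.Adj w u₁ → u₂ ≠ w → ¬ G.Adj w u₂ → deg G u₂ + 1 ≠ deg G u₁) :
    DsCompletable G w := by
  intro d
  by_contra! ⟨⟨u₂, hu₂w, hu₂d, hu₂⟩, ⟨u₁, -, hu₁d, hu₁⟩⟩
  have := cardDeg_add_one_of_adj G hu₁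
  have := cardDeg_of_not_adj G hu₂
  exact h u₁ u₂ hu₁ hu₂w hu₂ (by omega)

lemma eq_of_adj_of_deg_eq_one {p u v : V} (hp : deg G p = 1) (hv : G.Adj p v)
    (hu : G.Adj p u) : u = v :=
  (Set.ncard_le_one_iff).mp hp.le hu hv

lemma dsCompletable_of_adj_of_not_bad {v p : V} (hv : ¬ Bad G v) (hvp : G.Adj v p)
    (hp : deg G p = 1) : DsCompletable G p :=
  dsCompletable_of_forall_deg_add_one_ne G fun u₁ u₂ hpu₁ _ _ hdeg => by
    obtain rfl := eq_of_adj_of_deg_eq_one G hp hvp.symm hpu₁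
    exact hv ⟨u₂, hdeg⟩

lemma dsCompletable_of_forall_deg_ne_one_imp_adj {v : V} (hx : ∀ u, deg G u ≠ 2)
    (hadj : ∀ u ≠ v, deg G u ≠ 1 → G.Adj v u) : DsCompletable G v :=
  dsCompletable_of_forall_deg_add_one_ne G fun u₁ u₂ _ hu₂v hu₂ hdeg => by
    have : deg G u₂ = 1 := by_contra fun h1 => hu₂ (hadj u₂ hu₂v h1)
    exact hx u₁ (by omega)

end Finite

section Fintype

variable [Fintype V] (G : SimpleGraph V)

noncomputable def nonpendants : Finset V := univ.filter fun u => deg G u ≠ 1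

@[simp] lemma mem_nonpendants {u : V} : u ∈ nonpendants G ↔ deg G u ≠ 1 := by
  simp [nonpendants]

lemma card_pendants_add_card_nonpendants :
    #(univ.filter fun u => deg G u = 1) + #(nonpendants G) = Fintype.card V :=
  card_filter_add_card_filter_not _

lemma deg_eq_card_neighborFinset (u : V) : deg G u = #(G.neighborFinset u) := by
  rw [deg, ← Set.ncard_coe_finset, coe_neighborFinset]

lemma dsCompletable_of_card_nonpendants_le {w : V} (h0 : ∀ u, deg G u ≠ 0) (hw : deg G w ≠ 1)
    (h : #(nonpendants G) ≤ (if ∀ u : V, deg G u ≠ 2 then 1 else 0) + 1) :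
    DsCompletable G w :=
  dsCompletable_of_forall_deg_add_one_ne G fun u₁ u₂ hwu₁ hu₂w _ hdeg => by
    -- `u₁` is a second non-pendant, which forces `x = 1`; then `deg u₁ ≥ 3` makes `u₂` a third
    have h1 : deg G u₁ ≠ 1 := by have := h0 u₂; omega
    have hpair : 2 ≤ #(nonpendants G) :=
      calc 2 = #{w, u₁} := (card_pair hwu₁.ne).symm
        _ ≤ _ := card_le_card (by simp [insert_subset_iff, hw, h1])
    have hx : ∀ u, deg G u ≠ 2 := by
      by_contra hx
      rw [if_neg hx] at h
      omega
    have h2 : deg G u₂ ≠ 1 := by have := h0 u₂; have := hx u₁; omega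
    have hne : u₁ ≠ u₂ := by rintro rfl; omega
    have htriple : 3 ≤ #(nonpendants G) :=
      calc 3 = #{w, u₁, u₂} :=
          (card_eq_three.mpr ⟨w, u₁, u₂, hwu₁.ne, hu₂w.symm, hne, rfl⟩).symm
        _ ≤ _ := card_le_card (by simp [insert_subset_iff, hw, h1, h2])
    rw [if_pos hx] at h
    omega

lemma dsCompletable_of_forall_adj_deg_ne_one {v : V} (hv1 : deg G v ≠ 1)
    (hA : ∀ p, G.Adj v p → deg G p ≠ 1)
    (h : #(nonpendants G) < deg G v + (if ∀ u : V, deg G u ≠ 2 then 1 else 0) + 1) :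
    DsCompletable G v := by
  have hsub : G.neighborFinset v ⊆ (nonpendants G).erase v := fun u hu => by
    rw [mem_neighborFinset] at hu
    simp [hu.ne', hA u hu]
  have hle : #(G.neighborFinset v) + 1 ≤ #(nonpendants G) := by
    have := card_le_card hsub
    rw [card_erase_of_mem ((mem_nonpendants G).mpr hv1)] at this
    have := card_pos.mpr ⟨v, (mem_nonpendants G).mpr hv1⟩
    omega
  rw [deg_eq_card_neighborFinset] at h
  have hx : ∀ u, deg G u ≠ 2 := by
    by_contra hx
    rw [if_neg hx] at h
    omega
  rw [if_pos hx] at h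
  have hN : G.neighborFinset v = (nonpendants G).erase v :=
    eq_of_subset_of_card_le hsub (by rw [card_erase_of_mem ((mem_nonpendants G).mpr hv1)]; omega)
  refine dsCompletable_of_forall_deg_ne_one_imp_adj G hx fun u huv hu1 => ?_
  rw [← mem_neighborFinset, hN]
  simp [huv, hu1]

end Fintype

/-- If a good vertex has degree exceeding `n − 1 − κ₁ − x` (where `κ₁` is the number of
pendants and `x = 1` iff there is no vertex of degree 2), then the graph has a
ds-completable card. -/
theorem stmt18 [Fintype V] (G : SimpleGraph V) (v : V) (hv : ¬ Bad G v)
    (h : Fintype.card V < deg G v + (univ.filter fun u => deg G u = 1).card +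
      (if ∀ u : V, deg G u ≠ 2 then 1 else 0) + 1) :
    ∃ u : V, DsCompletable G u := by
  have hcount := card_pendants_add_card_nonpendants G
  by_cases hpendant : ∃ p, G.Adj v p ∧ deg G p = 1
  · obtain ⟨p, hvp, hp⟩ := hpendant
    exact ⟨p, dsCompletable_of_adj_of_not_bad G hv hvp hp⟩
  push Not at hpendant
  by_cases hv1 : deg G v = 1
  · obtain ⟨w, hvw⟩ := Set.nonempty_of_ncard_ne_zero (s := G.neighborSet v)
      (by change deg G v ≠ 0; omega)
    have h0 : ∀ u, deg G u ≠ 0 := fun u hu => hv ⟨u, by omega⟩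
    exact ⟨w, dsCompletable_of_card_nonpendants_le G h0 (hpendant w hvw) (by omega)⟩
  · exact ⟨v, dsCompletable_of_forall_adj_deg_ne_one G hv1 hpendant (by omega)⟩
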